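/- For the dialgebraic semantics of the asynchronous CCS (dialgebra f : F X → B X with F X = X + L_o × X, B X = Pfin((L_o∪{τ}) × X), defined by rules (run): x →α_f x' if x →α x' in the LTS with α ∈ {τ} ∪ outputs; (in): (c̄,x) →τ_f x' if x →c x'; (store): (c̄,x) →τ_f c̄ ∥ x' if x →τ x'), asynchronous bisimilarity ∼ coincides with back-and-forth bisimilarity ≃ of the dialgebra: for all CCS processes x, y, x ∼ y iff x ≃ y. -/
import Mathlib


/-- Asynchronous CCS processes over a set `C` of channels:
`∅ | τ.P | c.P | c̄ | P ∥ P | P + P`. -/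
inductive Proc (C : Type) : Type
  | nil : Proc C
  | tau : Proc C → Proc C
  | inp : C → Proc C → Proc C
  | out : C → Proc C
  | par : Proc C → Proc C → Proc C
  | sum : Proc C → Proc C → Proc C

/-- Labels: input `c`, output `c̄`, internal `τ`. -/
inductive Label (C : Type) : Type
  | inp : C → Label C
  | out : C → Label C
  | tau : Label C

/-- The standard CCS labelled transition system. -/
inductive Step {C : Type} : Proc C → Label C → Proc C → Prop
  | inp (c : C) (P : Proc C) : Step (Proc.inp c P) (Label.inp c) P
  | tau (P : Proc C) : Step (Proc.tau P) Label.tau P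
  | out (c : C) : Step (Proc.out c) (Label.out c) Proc.nil
  | parL {P P' : Proc C} {α : Label C} (Q : Proc C) :
      Step P α P' → Step (Proc.par P Q) α (Proc.par P' Q)
  | parR {Q Q' : Proc C} {α : Label C} (P : Proc C) :
      Step Q α Q' → Step (Proc.par P Q) α (Proc.par P Q')
  | syn {P P' Q Q' : Proc C} {c : C} :
      Step P (Label.inp c) P' → Step Q (Label.out c) Q' →
      Step (Proc.par P Q) Label.tau (Proc.par P' Q')
  | syn' {P P' Q Q' : Proc C} {c : C} :
      Step P (Label.out c) P' → Step Q (Label.inp c) Q' →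
      Step (Proc.par P Q) Label.tau (Proc.par P' Q')
  | sumL {P P' : Proc C} {α : Label C} (Q : Proc C) :
      Step P α P' → Step (Proc.sum P Q) α P'
  | sumR {Q Q' : Proc C} {α : Label C} (P : Proc C) :
      Step Q α Q' → Step (Proc.sum P Q) α Q'

/-- Asynchronous simulation: `τ` and output moves are matched exactly, while
an input move `x →c x'` may be matched either by an input `y →c y'` or by a
`τ` move `y →τ y''` with residual `y' = c̄ ∥ y''`. -/
def AsyncSim {C : Type} (R : Proc C → Proc C → Prop) : Prop :=
  ∀ x y, R x y → ∀ α x', Step x α x' →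
    ((α = Label.tau ∨ ∃ c, α = Label.out c) →
        ∃ y', Step y α y' ∧ R x' y') ∧
    (∀ c, α = Label.inp c →
        ∃ y', R x' y' ∧
          (Step y (Label.inp c) y' ∨
            ∃ y'', Step y Label.tau y'' ∧ y' = Proc.par (Proc.out c) y''))

/-- Asynchronous bisimulation: a simulation whose inverse is a simulation. -/
def AsyncBisim {C : Type} (R : Proc C → Proc C → Prop) : Prop :=
  AsyncSim R ∧ AsyncSim (fun a b => R b a)

/-- Asynchronous bisimilarity. -/
def AsyncBisimilar {C : Type} (x y : Proc C) : Prop :=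
  ∃ R, AsyncBisim R ∧ R x y

/-- Observations of the CCS dialgebra: outputs and `τ`. -/
inductive Obs (C : Type) : Type
  | out : C → Obs C
  | tau : Obs C

/-- Plain dialgebra transitions, rule (run): `x →α_f x'` iff `x →α x'` in the
LTS, for `α` an output or `τ`. -/
def DPlain {C : Type} (x : Proc C) (o : Obs C) (x' : Proc C) : Prop :=
  match o with
  | Obs.out c => Step x (Label.out c) x'
  | Obs.tau => Step x Label.tau x'

/-- Experiment transitions `(c̄,x) →τ_f x'`: rule (in) `x →c x'`, or rule
(store) `x →τ x''` with `x' = c̄ ∥ x''`. -/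
def DExp {C : Type} (c : C) (x x' : Proc C) : Prop :=
  Step x (Label.inp c) x' ∨
    ∃ x'', Step x Label.tau x'' ∧ x' = Proc.par (Proc.out c) x''

/-- Back-and-forth simulation for the CCS dialgebra. -/
def BFSim {C : Type} (R : Proc C → Proc C → Prop) : Prop :=
  ∀ x y, R x y →
    (∀ o x', DPlain x o x' → ∃ y', DPlain y o y' ∧ R x' y') ∧
    (∀ c x', DExp c x x' → ∃ y', DExp c y y' ∧ R x' y')

/-- Back-and-forth bisimulation. -/
def BFBisim {C : Type} (R : Proc C → Proc C → Prop) : Prop :=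
  BFSim R ∧ BFSim (fun a b => R b a)

/-- Back-and-forth bisimilarity of the CCS dialgebra. -/
def BFBisimilar {C : Type} (x y : Proc C) : Prop :=
  ∃ R, BFBisim R ∧ R x y

section Aux

variable {C : Type}

/-- Strong simulation. -/
def StrongSim (R : Proc C → Proc C → Prop) : Prop :=
  ∀ x y, R x y → ∀ α x', Step x α x' → ∃ y', Step y α y' ∧ R x' y'

/-- Strong bisimilarity. -/
def SB (x y : Proc C) : Prop :=
  ∃ R, StrongSim R ∧ StrongSim (fun a b => R b a) ∧ R x y

lemma sb_refl (x : Proc C) : SB x x :=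
  ⟨Eq, by rintro a b rfl α x' s; exact ⟨x', s, rfl⟩,
       by rintro a b rfl α x' s; exact ⟨x', s, rfl⟩, rfl⟩

lemma sb_symm {x y : Proc C} (h : SB x y) : SB y x := by
  obtain ⟨R, h1, h2, hxy⟩ := h
  exact ⟨fun a b => R b a, h2, h1, hxy⟩

lemma sb_trans {x y z : Proc C} (hxy : SB x y) (hyz : SB y z) : SB x z := by
  obtain ⟨R, r1, r2, hR⟩ := hxy
  obtain ⟨S, s1, s2, hS⟩ := hyz
  refine ⟨fun a c => ∃ b, R a b ∧ S b c, ?_, ?_, y, hR, hS⟩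
  · rintro a c ⟨b, hab, hbc⟩ α a' st
    obtain ⟨b', st', hb⟩ := r1 a b hab α a' st
    obtain ⟨c', st'', hc⟩ := s1 b c hbc α b' st'
    exact ⟨c', st'', b', hb, hc⟩
  · rintro c a ⟨b, hab, hbc⟩ α c' st
    obtain ⟨b', st', hb⟩ := s2 c b hbc α c' st
    obtain ⟨a', st'', ha⟩ := r2 b a hab α b' st'
    exact ⟨a', st'', b', ha, hb⟩

lemma sb_step {x y x' : Proc C} {α} (h : SB x y) (s : Step x α x') :
    ∃ y', Step y α y' ∧ SB x' y' := by
  obtain ⟨R, h1, h2, hxy⟩ := h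
  obtain ⟨y', st, hr⟩ := h1 x y hxy α x' s
  exact ⟨y', st, R, h1, h2, hr⟩

lemma sb_step' {x y y' : Proc C} {α} (h : SB x y) (s : Step y α y') :
    ∃ x', Step x α x' ∧ SB x' y' := by
  obtain ⟨x', st, h'⟩ := sb_step (sb_symm h) s
  exact ⟨x', st, sb_symm h'⟩

lemma strongSim_flip_of_symm {R : Proc C → Proc C → Prop}
    (hsym : ∀ a b, R a b → R b a) (h : StrongSim R) :
    StrongSim (fun a b => R b a) := by
  intro a b hba α a' s
  obtain ⟨b', st, h'⟩ := h a b (hsym b a hba) α a' s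
  exact ⟨b', st, hsym a' b' h'⟩

lemma sb_nil (p : Proc C) : SB (Proc.par Proc.nil p) p := by
  refine ⟨fun a b => a = Proc.par Proc.nil b, ?_, ?_, rfl⟩
  · rintro a b rfl α a' s
    cases s with
    | parL Q s => cases s
    | parR P s => exact ⟨_, s, rfl⟩
    | syn s1 s2 => cases s1
    | syn' s1 s2 => cases s1
  · rintro a b rfl α a' s
    exact ⟨Proc.par Proc.nil a', Step.parR _ s, rfl⟩

lemma sb_cong_out {c : C} {p q : Proc C} (h : SB p q) :
    SB (Proc.par (Proc.out c) p) (Proc.par (Proc.out c) q) := by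
  classical
  set R : Proc C → Proc C → Prop := fun a b =>
    SB a b ∨ ∃ p q, SB p q ∧ a = Proc.par (Proc.out c) p ∧ b = Proc.par (Proc.out c) q
    with hRdef
  have hsym : ∀ a b, R a b → R b a := by
    rintro a b (hab | ⟨p, q, hpq, rfl, rfl⟩)
    · exact Or.inl (sb_symm hab)
    · exact Or.inr ⟨q, p, sb_symm hpq, rfl, rfl⟩
  have hsim : StrongSim R := by
    rintro a b (hab | ⟨p, q, hpq, rfl, rfl⟩) α a' s
    · obtain ⟨b', st, h'⟩ := sb_step hab s
      exact ⟨b', st, Or.inl h'⟩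
    · cases s with
      | parL Q s =>
        cases s
        exact ⟨Proc.par Proc.nil q, Step.parL _ (Step.out c),
          Or.inl (sb_trans (sb_nil p) (sb_trans hpq (sb_symm (sb_nil q))))⟩
      | parR P s =>
        obtain ⟨q', st, h'⟩ := sb_step hpq s
        exact ⟨_, Step.parR _ st, Or.inr ⟨_, _, h', rfl, rfl⟩⟩
      | syn s1 s2 => cases s1
      | syn' s1 s2 =>
        cases s1
        obtain ⟨q', st, h'⟩ := sb_step hpq s2
        exact ⟨_, Step.syn' (Step.out c) st,
          Or.inl (sb_trans (sb_nil _) (sb_trans h' (sb_symm (sb_nil _))))⟩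
  exact ⟨R, hsim, strongSim_flip_of_symm hsym hsim, Or.inr ⟨p, q, h, rfl, rfl⟩⟩

lemma sb_swap (c d : C) (p : Proc C) :
    SB (Proc.par (Proc.out c) (Proc.par (Proc.out d) p))
       (Proc.par (Proc.out d) (Proc.par (Proc.out c) p)) := by
  set R : Proc C → Proc C → Prop := fun a b =>
    SB a b ∨ ∃ c d p, a = Proc.par (Proc.out c) (Proc.par (Proc.out d) p) ∧
      b = Proc.par (Proc.out d) (Proc.par (Proc.out c) p)
    with hRdef
  have hsym : ∀ a b, R a b → R b a := by
    rintro a b (hab | ⟨c, d, p, rfl, rfl⟩)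
    · exact Or.inl (sb_symm hab)
    · exact Or.inr ⟨d, c, p, rfl, rfl⟩
  have hsim : StrongSim R := by
    rintro a b (hab | ⟨c, d, p, rfl, rfl⟩) α a' s
    · obtain ⟨b', st, h'⟩ := sb_step hab s
      exact ⟨b', st, Or.inl h'⟩
    · cases s with
      | parL Q s =>
        cases s
        exact ⟨_, Step.parR _ (Step.parL _ (Step.out c)),
          Or.inl (sb_trans (sb_nil _) (sb_cong_out (sb_symm (sb_nil p))))⟩
      | parR P s =>
        cases s with
        | parL Q s2 =>
          cases s2
          exact ⟨Proc.par Proc.nil (Proc.par (Proc.out c) p), Step.parL _ (Step.out d),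
            Or.inl (sb_trans (sb_cong_out (sb_nil p)) (sb_symm (sb_nil _)))⟩
        | parR P s2 =>
          exact ⟨_, Step.parR _ (Step.parR _ s2), Or.inr ⟨c, d, _, rfl, rfl⟩⟩
        | syn s2 s3 => cases s2
        | syn' s2 s3 =>
          cases s2
          exact ⟨_, Step.syn' (Step.out d) (Step.parR _ s3),
            Or.inl (sb_trans (sb_cong_out (sb_nil _)) (sb_symm (sb_nil _)))⟩
      | syn s1 s2 => cases s1
      | syn' s1 s2 =>
        cases s1
        cases s2 with
        | parL Q s3 => cases s3
        | parR P s3 =>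
          exact ⟨_, Step.parR _ (Step.syn' (Step.out c) s3),
            Or.inl (sb_trans (sb_nil _) (sb_cong_out (sb_symm (sb_nil _))))⟩
  exact ⟨R, hsim, strongSim_flip_of_symm hsym hsim, Or.inr ⟨c, d, p, rfl, rfl⟩⟩

/-- Wrap a process with a list of output buffers. -/
def wrap : List C → Proc C → Proc C
  | [], p => p
  | c :: l, p => Proc.par (Proc.out c) (wrap l p)

lemma wrap_append (l₁ l₂ : List C) (p : Proc C) :
    wrap (l₁ ++ l₂) p = wrap l₁ (wrap l₂ p) := by
  induction l₁ with
  | nil => rfl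
  | cons c l ih => simp [wrap, ih]

lemma sb_wrap_perm {l₁ l₂ : List C} (h : l₁.Perm l₂) (p : Proc C) :
    SB (wrap l₁ p) (wrap l₂ p) := by
  induction h with
  | nil => exact sb_refl _
  | cons a _ ih => exact sb_cong_out ih
  | swap a b l => exact sb_swap _ _ _
  | trans _ _ ih1 ih2 => exact sb_trans ih1 ih2

lemma wrap_step {l : List C} {u u' : Proc C} {α} (s : Step u α u') :
    Step (wrap l u) α (wrap l u') := by
  induction l with
  | nil => exact s
  | cons c l ih => exact Step.parR _ ih

lemma wrap_inp {l : List C} {u p' : Proc C} {c : C}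
    (s : Step (wrap l u) (Label.inp c) p') :
    ∃ u', Step u (Label.inp c) u' ∧ p' = wrap l u' := by
  induction l generalizing p' with
  | nil => exact ⟨p', s, rfl⟩
  | cons d l ih =>
    cases s with
    | parL Q s1 => cases s1
    | parR P s1 =>
      obtain ⟨u', su, rfl⟩ := ih s1
      exact ⟨u', su, rfl⟩

lemma wrap_step_inv {l : List C} {u p' : Proc C} {α}
    (s : Step (wrap l u) α p') :
    (∃ u', Step u α u' ∧ p' = wrap l u') ∨
    (∃ c m, α = Label.out c ∧ (c :: m).Perm l ∧ SB p' (wrap m u)) ∨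
    (∃ c m u', α = Label.tau ∧ (c :: m).Perm l ∧ Step u (Label.inp c) u' ∧
      SB p' (wrap m u')) := by
  induction l generalizing p' with
  | nil => exact Or.inl ⟨p', s, rfl⟩
  | cons d l ih =>
    cases s with
    | parL Q s1 =>
      cases s1
      exact Or.inr (Or.inl ⟨d, l, rfl, List.Perm.refl _, sb_nil _⟩)
    | parR P s1 =>
      rcases ih s1 with ⟨u', su, rfl⟩ | ⟨c, m, rfl, hperm, hw⟩ |
        ⟨c, m, u', rfl, hperm, su, hw⟩
      · exact Or.inl ⟨u', su, rfl⟩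
      · exact Or.inr (Or.inl ⟨c, d :: m, rfl,
          (List.Perm.swap d c m).trans (hperm.cons d), sb_cong_out hw⟩)
      · exact Or.inr (Or.inr ⟨c, d :: m, u', rfl,
          (List.Perm.swap d c m).trans (hperm.cons d), su, sb_cong_out hw⟩)
    | syn s1 s2 => cases s1
    | syn' s1 s2 =>
      cases s1
      obtain ⟨u', su, rfl⟩ := wrap_inp s2
      exact Or.inr (Or.inr ⟨d, l, u', rfl, List.Perm.refl _, su, sb_nil _⟩)

lemma absim : AsyncSim (fun x y : Proc C => AsyncBisimilar x y) := by
  rintro x y ⟨R, hR, hxy⟩ α x' s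
  obtain ⟨h1, h2⟩ := hR.1 x y hxy α x' s
  constructor
  · intro hα
    obtain ⟨y', st, hr⟩ := h1 hα
    exact ⟨y', st, R, hR, hr⟩
  · rintro c rfl
    obtain ⟨y', hr, hd⟩ := h2 c rfl
    exact ⟨y', ⟨R, hR, hr⟩, hd⟩

lemma absymm {x y : Proc C} (h : AsyncBisimilar x y) : AsyncBisimilar y x := by
  obtain ⟨R, ⟨h1, h2⟩, hxy⟩ := h
  exact ⟨fun a b => R b a, ⟨h2, h1⟩, hxy⟩

/-- Closure of asynchronous bisimilarity under output buffers, up to strong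
bisimilarity. -/
def Cl (a b : Proc C) : Prop :=
  ∃ l u v, SB a (wrap l u) ∧ SB b (wrap l v) ∧ AsyncBisimilar u v

lemma cl_symm {a b : Proc C} (h : Cl a b) : Cl b a := by
  obtain ⟨l, u, v, ha, hb, huv⟩ := h
  exact ⟨l, v, u, hb, ha, absymm huv⟩

lemma sb_wrap_push (c : C) (l : List C) (p : Proc C) :
    SB (wrap (c :: l) p) (wrap l (Proc.par (Proc.out c) p)) := by
  have h := sb_wrap_perm ((List.perm_append_singleton c l).symm) p
  have e : wrap (l ++ [c]) p = wrap l (Proc.par (Proc.out c) p) := by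
    rw [wrap_append]; rfl
  rwa [e] at h

lemma cl_plain {a b a' : Proc C} {α} (h : Cl a b) (s : Step a α a')
    (hα : α = Label.tau ∨ ∃ c, α = Label.out c) :
    ∃ b', Step b α b' ∧ Cl a' b' := by
  obtain ⟨l, u, v, ha, hb, huv⟩ := h
  obtain ⟨w', sw, haw⟩ := sb_step ha s
  rcases wrap_step_inv sw with ⟨u', su, rfl⟩ | ⟨c, m, rfl, hperm, hw⟩ |
    ⟨c, m, u', rfl, hperm, su, hw⟩
  · obtain ⟨v', sv, huv'⟩ := (absim u v huv α u' su).1 hα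
    obtain ⟨b', sb, hbw⟩ := sb_step' hb (wrap_step sv)
    exact ⟨b', sb, l, u', v', haw, hbw, huv'⟩
  · have hbv : SB b (wrap (c :: m) v) := sb_trans hb (sb_wrap_perm hperm.symm v)
    obtain ⟨b', sb, hbw⟩ := sb_step' hbv (Step.parL _ (Step.out c))
    exact ⟨b', sb, m, u, v, sb_trans haw hw, sb_trans hbw (sb_nil _), huv⟩
  · obtain ⟨v', huv', hv⟩ := (absim u v huv (Label.inp c) u' su).2 c rfl
    rcases hv with hin | ⟨v'', sv, rfl⟩
    · have hbv : SB b (wrap (c :: m) v) := sb_trans hb (sb_wrap_perm hperm.symm v)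
      obtain ⟨b', sb, hbw⟩ := sb_step' hbv (Step.syn' (Step.out c) (wrap_step hin))
      exact ⟨b', sb, m, u', v', sb_trans haw hw, sb_trans hbw (sb_nil _), huv'⟩
    · obtain ⟨b', sb, hbw⟩ := sb_step' hb (wrap_step sv)
      refine ⟨b', sb, m, u', Proc.par (Proc.out c) v'', sb_trans haw hw, ?_, huv'⟩
      have h1 : SB b' (wrap (c :: m) v'') :=
        sb_trans hbw (sb_wrap_perm hperm.symm v'')
      exact sb_trans h1 (sb_wrap_push c m v'')

lemma cl_bfsim : BFSim (fun a b : Proc C => Cl a b) := by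
  intro a b h
  constructor
  · intro o a' hp
    cases o with
    | tau => exact cl_plain h hp (Or.inl rfl)
    | out c => exact cl_plain h hp (Or.inr ⟨c, rfl⟩)
  · intro c a' he
    rcases he with hin | ⟨a'', sa, rfl⟩
    · obtain ⟨l, u, v, ha, hb, huv⟩ := h
      obtain ⟨w', sw, haw⟩ := sb_step ha hin
      obtain ⟨u', su, rfl⟩ := wrap_inp sw
      obtain ⟨v', huv', hv⟩ := (absim u v huv (Label.inp c) u' su).2 c rfl
      rcases hv with hvin | ⟨v'', sv, rfl⟩
      · obtain ⟨b', sb, hbw⟩ := sb_step' hb (wrap_step hvin)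
        exact ⟨b', Or.inl sb, l, u', v', haw, hbw, huv'⟩
      · obtain ⟨b'', sb, hbw⟩ := sb_step' hb (wrap_step sv)
        refine ⟨Proc.par (Proc.out c) b'', Or.inr ⟨b'', sb, rfl⟩,
          l, u', Proc.par (Proc.out c) v'', haw, ?_, huv'⟩
        have h1 : SB (Proc.par (Proc.out c) b'') (wrap (c :: l) v'') :=
          sb_cong_out hbw
        exact sb_trans h1 (sb_wrap_push c l v'')
    · obtain ⟨b'', sb, hcl⟩ := cl_plain h sa (Or.inl rfl)
      obtain ⟨l, u, v, ha2, hb2, huv2⟩ := hcl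
      exact ⟨Proc.par (Proc.out c) b'', Or.inr ⟨b'', sb, rfl⟩,
        c :: l, u, v, sb_cong_out ha2, sb_cong_out hb2, huv2⟩

lemma bfsim_flip_of_symm {R : Proc C → Proc C → Prop}
    (hsym : ∀ a b, R a b → R b a) (h : BFSim R) : BFSim (fun a b => R b a) := by
  intro a b hba
  obtain ⟨h1, h2⟩ := h a b (hsym b a hba)
  constructor
  · intro o x' hp
    obtain ⟨y', hy, hr⟩ := h1 o x' hp
    exact ⟨y', hy, hsym _ _ hr⟩
  · intro c x' he
    obtain ⟨y', hy, hr⟩ := h2 c x' he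
    exact ⟨y', hy, hsym _ _ hr⟩

lemma bf_to_async {R : Proc C → Proc C → Prop} (h : BFSim R) : AsyncSim R := by
  intro x y hxy α x' s
  constructor
  · rintro (rfl | ⟨c, rfl⟩)
    · exact (h x y hxy).1 Obs.tau x' s
    · exact (h x y hxy).1 (Obs.out c) x' s
  · rintro c rfl
    obtain ⟨y', hd, hr⟩ := (h x y hxy).2 c x' (Or.inl s)
    exact ⟨y', hr, hd⟩

end Aux

/-- Asynchronous bisimilarity coincides with back-and-forth bisimilarity of
the CCS dialgebra. -/
theorem async_iff_backAndForth {C : Type} (x y : Proc C) :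
    AsyncBisimilar x y ↔ BFBisimilar x y := by
  constructor
  · intro h
    exact ⟨fun a b => Cl a b,
      ⟨cl_bfsim, bfsim_flip_of_symm (fun a b => cl_symm) cl_bfsim⟩,
      [], x, y, sb_refl x, sb_refl y, h⟩
  · rintro ⟨R, ⟨h1, h2⟩, hxy⟩
    exact ⟨R, ⟨bf_to_async h1, bf_to_async h2⟩, hxy⟩
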